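/- arXiv:2211.15065 — 2 statements merged into one kernel-verified Lean document; each statement's English description precedes it below -/
import Mathlib

section
/- (Theorem 3, large-α clipping.) In the setting of Theorem 1, assume α > 0, d^D(s) > 0 and Dis(π)(s) ≥ 0 for all π ∈ Π and s, and for C > 0 define the clipped weight w_C^π(s) := min(w^π(s), C) where w^π(s) := d_D^π(s)/d^D(s). Let π̄ ∈ Π be a minimizer over Π of INF_{Dis}(π) := ⟨ρ, V^{π*} − V^π⟩ + ⟨d_D^π, u^π + α·Dis(π)⟩. If there exists a state s₀ with d_D^{π̄}(s₀)·Dis(π̄)(s₀) > 0 and w^{π̄}(s₀) < 1, then there exists C > 1 such that min_{π∈Π} ( ⟨ρ, V^{π*} − V^π⟩ + ⟨d_D^π, u^π + α·w_C^π·Dis(π)⟩ ) ≤ min_{π∈Π} INF_{Dis}(π). -/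
open Matrix Finset

/-- The activity matrix `Aπ` of a policy `π`: `Aπ s (s', a) = π s a` if `s' = s`, else `0`. -/
def actMat {S A : Type*} [DecidableEq S] (π : S → A → ℝ) : Matrix S (S × A) ℝ :=
  Matrix.of fun s p => if p.1 = s then π s p.2 else 0

/-- The value vector `V^π = (I − γ Aπ P)⁻¹ (Aπ r)`. -/
noncomputable def valVec {S A : Type*} [Fintype S] [Fintype A] [DecidableEq S]
    (γ : ℝ) (P : Matrix (S × A) S ℝ) (r : S × A → ℝ) (π : S → A → ℝ) : S → ℝ :=
  (1 - γ • (actMat π * P))⁻¹.mulVec ((actMat π).mulVec r)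

/-- The discounted occupancy row vector `d^π = ρᵀ (I − γ Aπ P)⁻¹`. -/
noncomputable def occVec {S A : Type*} [Fintype S] [Fintype A] [DecidableEq S]
    (γ : ℝ) (P : Matrix (S × A) S ℝ) (ρ : S → ℝ) (π : S → A → ℝ) : S → ℝ :=
  Matrix.vecMul ρ (1 - γ • (actMat π * P))⁻¹

/-- The normalized discounted occupancy `(1 − γ)·ρᵀ (I − γ Aπ P)⁻¹`. -/
noncomputable def noccVec {S A : Type*} [Fintype S] [Fintype A] [DecidableEq S]
    (γ : ℝ) (P : Matrix (S × A) S ℝ) (ρ : S → ℝ) (π : S → A → ℝ) : S → ℝ :=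
  fun s => (1 - γ) * Matrix.vecMul ρ (1 - γ • (actMat π * P))⁻¹ s

section Aux

attribute [local instance] Matrix.linftyOpNormedRing Matrix.linftyOpNormedAlgebra

lemma pow_entry_nonneg {n : Type*} [Fintype n] [DecidableEq n]
    (M : Matrix n n ℝ) (hM : ∀ i j, 0 ≤ M i j) (k : ℕ) : ∀ i j, 0 ≤ (M ^ k) i j := by
  induction k with
  | zero => intro i j; simp [Matrix.one_apply]; positivity
  | succ k ih =>
    intro i j
    rw [pow_succ, Matrix.mul_apply]
    exact Finset.sum_nonneg fun l _ => mul_nonneg (ih i l) (hM l j)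

lemma inv_one_sub_smul_nonneg {n : Type*} [Fintype n] [DecidableEq n]
    (B : Matrix n n ℝ) (hB0 : ∀ i j, 0 ≤ B i j) (hB1 : ∀ i, ∑ j, B i j = 1)
    {γ : ℝ} (hγ0 : 0 ≤ γ) (hγ1 : γ < 1) : ∀ i j, 0 ≤ (1 - γ • B)⁻¹ i j := by
  have hBn : ‖B‖ ≤ 1 := by
    have : ‖B‖₊ ≤ 1 := by
      rw [Matrix.linfty_opNNNorm_def]
      refine Finset.sup_le fun i _ => ?_
      rw [← NNReal.coe_le_coe, NNReal.coe_sum, NNReal.coe_one]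
      simp only [coe_nnnorm, Real.norm_eq_abs]
      refine le_of_eq ?_
      calc ∑ j, |B i j| = ∑ j, B i j :=
            Finset.sum_congr rfl fun j _ => abs_of_nonneg (hB0 i j)
        _ = 1 := hB1 i
    exact_mod_cast this
  have hnorm : ‖γ • B‖ < 1 := by
    rw [norm_smul, Real.norm_eq_abs, abs_of_nonneg hγ0]
    calc γ * ‖B‖ ≤ γ * 1 := by nlinarith [norm_nonneg B]
      _ < 1 := by linarith
  have hs : HasSum (fun k => (γ • B) ^ k) (Ring.inverse (1 - γ • B)) :=
    hasSum_geom_series_inverse _ hnorm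
  intro i j
  let l : Matrix n n ℝ →ₗ[ℝ] ℝ :=
    { toFun := fun A => A i j, map_add' := fun _ _ => rfl, map_smul' := fun _ _ => rfl }
  have hs2 : HasSum (fun k => ((γ • B) ^ k) i j) (Ring.inverse (1 - γ • B) i j) :=
    hs.map l.toContinuousLinearMap l.toContinuousLinearMap.continuous
  have := hasSum_le (fun k => pow_entry_nonneg (γ • B)
      (fun a b => by simpa using mul_nonneg hγ0 (hB0 a b)) k i j) hasSum_zero hs2
  rwa [Matrix.nonsing_inv_eq_ringInverse]

lemma actMat_mul_apply {S A : Type*} [Fintype S] [Fintype A] [DecidableEq S]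
    (π : S → A → ℝ) (PD : Matrix (S × A) S ℝ) (i j : S) :
    (actMat π * PD) i j = ∑ a, π i a * PD (i, a) j := by
  rw [Matrix.mul_apply, Fintype.sum_prod_type]
  trans (∑ x, if x = i then ∑ a, π i a * PD (x, a) j else 0)
  · exact Finset.sum_congr rfl fun x _ => by by_cases hx : x = i <;> simp [actMat, hx]
  · rw [Finset.sum_ite_eq' Finset.univ i]; simp

lemma noccVec_nonneg {S A : Type*} [Fintype S] [Fintype A] [DecidableEq S]
    (PD : Matrix (S × A) S ℝ)
    (hPD0 : ∀ p s, 0 ≤ PD p s) (hPD1 : ∀ p, ∑ s, PD p s = 1)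
    {γ : ℝ} (hγ0 : 0 ≤ γ) (hγ1 : γ < 1)
    (ρ : S → ℝ) (hρ0 : ∀ s, 0 ≤ ρ s)
    (π : S → A → ℝ) (hπ0 : ∀ s a, 0 ≤ π s a) (hπ1 : ∀ s, ∑ a, π s a = 1)
    (s : S) : 0 ≤ noccVec γ PD ρ π s := by
  have hB0 : ∀ i j, 0 ≤ (actMat π * PD) i j := by
    intro i j
    rw [actMat_mul_apply]
    exact Finset.sum_nonneg fun a _ => mul_nonneg (hπ0 i a) (hPD0 _ j)
  have hB1 : ∀ i, ∑ j, (actMat π * PD) i j = 1 := by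
    intro i
    simp only [actMat_mul_apply]
    rw [Finset.sum_comm]
    calc ∑ a, ∑ j, π i a * PD (i, a) j = ∑ a, π i a * ∑ j, PD (i, a) j := by
          simp [Finset.mul_sum]
      _ = 1 := by simp [hPD1, hπ1]
  have hinv := inv_one_sub_smul_nonneg _ hB0 hB1 hγ0 hγ1
  unfold noccVec
  refine mul_nonneg (by linarith) ?_
  rw [Matrix.vecMul, dotProduct]
  exact Finset.sum_nonneg fun i _ => mul_nonneg (hρ0 i) (hinv i s)

end Aux

/-- Theorem 3, large-α clipping. If at the minimizer `π̄` of the plain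
infimum term there is a state with positive occupancy-weighted divergence where the ratio
`w^π̄(s₀) = d_D^π̄(s₀)/d^D(s₀)` is below `1`, then for some clipping level `C > 1` the infimum
term with clipped state-aware penalty `min(w, C)·Dis` is at most the plain infimum term. -/
theorem clipped_state_aware_inf_le {S A : Type*} [Fintype S] [Fintype A]
    [Nonempty S] [Nonempty A] [DecidableEq S]
    (P PD : Matrix (S × A) S ℝ)
    (hP0 : ∀ p s, 0 ≤ P p s) (hP1 : ∀ p, ∑ s, P p s = 1)
    (hPD0 : ∀ p s, 0 ≤ PD p s) (hPD1 : ∀ p, ∑ s, PD p s = 1)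
    (r : S × A → ℝ) (γ : ℝ) (hγ0 : 0 ≤ γ) (hγ1 : γ < 1)
    (ρ : S → ℝ) (hρ0 : ∀ s, 0 ≤ ρ s) (hρ1 : ∑ s, ρ s = 1)
    (Pol : Finset (S → A → ℝ)) (hPolne : Pol.Nonempty)
    (hPol : ∀ π ∈ Pol, (∀ s a, 0 ≤ π s a) ∧ (∀ s, ∑ a, π s a = 1))
    (πstar : S → A → ℝ) (hπstar0 : ∀ s a, 0 ≤ πstar s a) (hπstar1 : ∀ s, ∑ a, πstar s a = 1)
    (α : ℝ) (hα : 0 < α)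
    (dDat : S → ℝ) (hdDat : ∀ s, 0 < dDat s)
    (Dis u : (S → A → ℝ) → S → ℝ)
    (hDis : ∀ π ∈ Pol, ∀ s, 0 ≤ Dis π s)
    (πbar : S → A → ℝ) (hπbar : πbar ∈ Pol)
    (hπbarmin : ∀ π ∈ Pol,
      ∑ s, ρ s * (valVec γ P r πstar s - valVec γ P r πbar s)
          + ∑ s, noccVec γ PD ρ πbar s * (u πbar s + α * Dis πbar s)
        ≤ ∑ s, ρ s * (valVec γ P r πstar s - valVec γ P r π s)
          + ∑ s, noccVec γ PD ρ π s * (u π s + α * Dis π s))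
    (hslack : ∃ s₀, 0 < noccVec γ PD ρ πbar s₀ * Dis πbar s₀ ∧
      noccVec γ PD ρ πbar s₀ / dDat s₀ < 1) :
    ∃ C > (1 : ℝ),
      Pol.inf' hPolne (fun π =>
          ∑ s, ρ s * (valVec γ P r πstar s - valVec γ P r π s)
            + ∑ s, noccVec γ PD ρ π s
                * (u π s + α * (min (noccVec γ PD ρ π s / dDat s) C * Dis π s)))
        ≤ Pol.inf' hPolne (fun π =>
            ∑ s, ρ s * (valVec γ P r πstar s - valVec γ P r π s)
              + ∑ s, noccVec γ PD ρ π s * (u π s + α * Dis π s)) := by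
  obtain ⟨s₀, hpos, hw⟩ := hslack
  set d : S → ℝ := noccVec γ PD ρ πbar with hd
  have hd0 : ∀ s, 0 ≤ d s := fun s =>
    noccVec_nonneg PD hPD0 hPD1 hγ0 hγ1 ρ hρ0 πbar (hPol πbar hπbar).1 (hPol πbar hπbar).2 s
  have hDis0 : ∀ s, 0 ≤ Dis πbar s := hDis πbar hπbar
  have hds₀ : 0 < d s₀ := by
    rcases (hd0 s₀).lt_or_eq with h | h
    · exact h
    · exfalso; rw [← h] at hpos; simp at hpos
  have hDiss₀ : 0 < Dis πbar s₀ := by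
    rcases (hDis0 s₀).lt_or_eq with h | h
    · exact h
    · exfalso; rw [← h] at hpos; simp at hpos
  set δ : ℝ := α * (d s₀ * Dis πbar s₀) * (1 - d s₀ / dDat s₀) with hδdef
  have hδ : 0 < δ := by
    apply mul_pos (mul_pos hα (mul_pos hds₀ hDiss₀)); linarith
  set M : ℝ := ∑ s, α * (d s * Dis πbar s) with hMdef
  have hM0 : 0 ≤ M :=
    Finset.sum_nonneg fun s _ => mul_nonneg hα.le (mul_nonneg (hd0 s) (hDis0 s))
  set C : ℝ := 1 + δ / (M + 1) with hCdef
  have hC : 1 < C := by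
    have h : 0 < δ / (M + 1) := div_pos hδ (by linarith)
    rw [hCdef]; linarith
  refine ⟨C, hC, ?_⟩
  -- key : clipped objective at πbar ≤ plain objective at πbar
  have key : ∑ s, d s * (u πbar s + α * (min (d s / dDat s) C * Dis πbar s))
      ≤ ∑ s, d s * (u πbar s + α * Dis πbar s) := by
    rw [← sub_nonpos, ← Finset.sum_sub_distrib]
    have hterm : ∀ s, d s * (u πbar s + α * (min (d s / dDat s) C * Dis πbar s))
        - d s * (u πbar s + α * Dis πbar s)
        = α * (d s * Dis πbar s) * (min (d s / dDat s) C - 1) := by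
      intro s; ring
    simp_rw [hterm]
    rw [← Finset.add_sum_erase _ _ (Finset.mem_univ s₀)]
    have h1 : α * (d s₀ * Dis πbar s₀) * (min (d s₀ / dDat s₀) C - 1) = -δ := by
      rw [min_eq_left (le_of_lt (hw.trans hC))]; rw [hδdef]; ring
    have h2 : ∑ s ∈ Finset.univ.erase s₀, α * (d s * Dis πbar s) * (min (d s / dDat s) C - 1)
        ≤ ∑ s ∈ Finset.univ.erase s₀, α * (d s * Dis πbar s) * (C - 1) := by
      refine Finset.sum_le_sum fun s _ => ?_
      refine mul_le_mul_of_nonneg_left ?_ (mul_nonneg hα.le (mul_nonneg (hd0 s) (hDis0 s)))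
      have := min_le_right (d s / dDat s) C
      linarith
    have h3 : ∑ s ∈ Finset.univ.erase s₀, α * (d s * Dis πbar s) * (C - 1) ≤ M * (C - 1) := by
      rw [← Finset.sum_mul]
      refine mul_le_mul_of_nonneg_right ?_ (by linarith)
      refine Finset.sum_le_sum_of_subset_of_nonneg (Finset.erase_subset _ _)
        fun s _ _ => mul_nonneg hα.le (mul_nonneg (hd0 s) (hDis0 s))
    have h4 : M * (C - 1) ≤ δ := by
      have hM1 : (0:ℝ) < M + 1 := by linarith
      have h5 : C - 1 = δ / (M + 1) := by rw [hCdef]; ring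
      have h6 : M * (δ / (M + 1)) = M * δ / (M + 1) := by ring
      rw [h5, h6, div_le_iff₀ hM1]
      nlinarith
    linarith [h1, h2, h3, h4]
  calc Pol.inf' hPolne (fun π =>
          ∑ s, ρ s * (valVec γ P r πstar s - valVec γ P r π s)
            + ∑ s, noccVec γ PD ρ π s
                * (u π s + α * (min (noccVec γ PD ρ π s / dDat s) C * Dis π s)))
      ≤ ∑ s, ρ s * (valVec γ P r πstar s - valVec γ P r πbar s)
          + ∑ s, d s * (u πbar s + α * (min (d s / dDat s) C * Dis πbar s)) :=
        Finset.inf'_le _ hπbar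
    _ ≤ ∑ s, ρ s * (valVec γ P r πstar s - valVec γ P r πbar s)
          + ∑ s, d s * (u πbar s + α * Dis πbar s) := by linarith [key]
    _ ≤ Pol.inf' hPolne (fun π =>
            ∑ s, ρ s * (valVec γ P r πstar s - valVec γ P r π s)
              + ∑ s, noccVec γ PD ρ π s * (u π s + α * Dis π s)) :=
        Finset.le_inf' hPolne _ fun π hπ => hπbarmin π hπ
end

section
/- (Theorem 4, underestimation.) In the finite tabular setting, let (P, r) be the true model, (P_D, r_D) an empirical model, π a policy with activity matrix Aπ, π̂β a policy with π̂β(a|s) > 0 for all s, a, γ ∈ [0,1), α > 0, and w : S → ℝ nonnegative. Define DisCQL(s) := ∑_a π(a|s)·(π(a|s)/π̂β(a|s) − 1) and e(s,a) := w(s)·(π(a|s) − π̂β(a|s))/π̂β(a|s). Let Q̂^π be the unique fixed point of Q ↦ r_D + γ·P_D·Aπ·Q − α·e, set V̂^π(s) := ∑_a π(a|s)·Q̂^π(s,a), and let V^π := (I − γAπP)⁻¹(Aπ r). Suppose u : S → ℝ is nonnegative and |(Aπ(r_D − r) + γ·Aπ(P_D − P)·V^π)(s)| ≤ u(s) for every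 s. Then for every state s, V̂^π(s) ≤ V^π(s) − α·w(s)·DisCQL(s) + ((I − γAπP_D)⁻¹ u)(s). In particular, if moreover α·w(s)·DisCQL(s) ≥ ((I − γAπP_D)⁻¹ u)(s) for all s, then V̂^π(s) ≤ V^π(s) for all s. -/
/-!
Subtracting the Bellman equations of `V̂ = Aπ Q̂` (empirical model, penalised by `α w DisCQL`)
and of `V^π` (true model) gives `(I − γ Aπ P_D)(V̂ − V^π) = Δ − α w DisCQL`, where `Δ` is the
model-mismatch residual bounded by `u`. Because `Aπ P_D` is row-stochastic, `I − γ Aπ P_D`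
obeys a discrete minimum principle, and `DisCQL ≥ 0` by Cauchy–Schwarz; together these turn
the identity into the bound.
-/

open Matrix Finset

namespace Matrix

variable {n : Type*} [Fintype n] [DecidableEq n] {N : Matrix n n ℝ} {γ : ℝ}

/-- Discrete minimum principle: where `x` is smallest, `x k ≥ γ (N x) k ≥ γ x k`. -/
theorem nonneg_of_nonneg_one_sub_smul_mulVec (hN : N ∈ rowStochastic ℝ n) (hγ0 : 0 ≤ γ)
    (hγ1 : γ < 1) {x : n → ℝ} (hx : 0 ≤ (1 - γ • N) *ᵥ x) : 0 ≤ x := by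
  intro i
  obtain ⟨k, -, hk⟩ := exists_min_image univ x ⟨i, mem_univ i⟩
  have hNx : x k ≤ (N *ᵥ x) k :=
    calc x k = ∑ j, N k j * x k := by rw [← sum_mul, sum_row_of_mem_rowStochastic hN, one_mul]
      _ ≤ ∑ j, N k j * x j := sum_le_sum fun j _ =>
          mul_le_mul_of_nonneg_left (hk j (mem_univ j)) (nonneg_of_mem_rowStochastic hN)
  have hxk : γ * (N *ᵥ x) k ≤ x k := by
    simpa [sub_mulVec, smul_mulVec] using hx k
  have : 0 ≤ x k := by nlinarith [mul_le_mul_of_nonneg_left hNx hγ0]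
  exact this.trans (hk i (mem_univ i))

theorem isUnit_one_sub_smul (hN : N ∈ rowStochastic ℝ n) (hγ0 : 0 ≤ γ) (hγ1 : γ < 1) :
    IsUnit (1 - γ • N) := by
  rw [← mulVec_injective_iff_isUnit]
  intro x y hxy
  have hle {x y : n → ℝ} (h : (1 - γ • N) *ᵥ x = (1 - γ • N) *ᵥ y) : x ≤ y := by
    rw [← sub_nonneg]
    exact nonneg_of_nonneg_one_sub_smul_mulVec hN hγ0 hγ1 (by rw [mulVec_sub, h, sub_self])
  exact le_antisymm (hle hxy) (hle hxy.symm)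

theorem one_sub_smul_mulVec_inv_mulVec (hN : N ∈ rowStochastic ℝ n) (hγ0 : 0 ≤ γ)
    (hγ1 : γ < 1) (b : n → ℝ) : (1 - γ • N) *ᵥ ((1 - γ • N)⁻¹ *ᵥ b) = b := by
  rw [mulVec_mulVec,
    mul_nonsing_inv _ ((isUnit_iff_isUnit_det _).1 (isUnit_one_sub_smul hN hγ0 hγ1)), one_mulVec]

/-- If `(1 - γN) z = Δ - α c` with `Δ ≤ u` and `c ≥ 0`, then `z ≤ (1 - γN)⁻¹ u - α c`:
the gap `(1 - γN)⁻¹ u - α c - z` is mapped by `1 - γN` to `(u - Δ) + αγ N c ≥ 0`. -/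
theorem le_inv_mulVec_sub_smul_of_mulVec_eq (hN : N ∈ rowStochastic ℝ n) (hγ0 : 0 ≤ γ)
    (hγ1 : γ < 1) {α : ℝ} (hα : 0 ≤ α) {z Δ u c : n → ℝ} (hΔu : Δ ≤ u) (hc : 0 ≤ c)
    (hz : (1 - γ • N) *ᵥ z = Δ - α • c) : z ≤ (1 - γ • N)⁻¹ *ᵥ u - α • c := by
  rw [← sub_nonneg]
  refine nonneg_of_nonneg_one_sub_smul_mulVec hN hγ0 hγ1 ?_
  have hgap : (1 - γ • N) *ᵥ ((1 - γ • N)⁻¹ *ᵥ u - α • c - z)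
      = (u - Δ) + (α * γ) • (N *ᵥ c) := by
    rw [mulVec_sub, mulVec_sub, one_sub_smul_mulVec_inv_mulVec hN hγ0 hγ1, hz, mulVec_smul,
      sub_mulVec, one_mulVec, smul_mulVec]
    module
  rw [hgap]
  exact add_nonneg (sub_nonneg.2 hΔu)
    (smul_nonneg (mul_nonneg hα hγ0) (nonneg_mulVec_of_mem_rowStochastic hN hc))

end Matrix

section ActivityMatrix

variable {S A : Type*} [Fintype S] [Fintype A] [DecidableEq S]

theorem actMat_mulVec_apply (π : S → A → ℝ) (v : S × A → ℝ) (s : S) :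
    (actMat π *ᵥ v) s = ∑ a, π s a * v (s, a) := by
  simp only [mulVec, dotProduct, actMat, of_apply, Fintype.sum_prod_type]
  rw [sum_eq_single s (fun t _ hts => by simp [hts]) (by simp)]
  simp

theorem actMat_mul_mem_rowStochastic {π : S → A → ℝ} (hπ0 : ∀ s a, 0 ≤ π s a)
    (hπ1 : ∀ s, ∑ a, π s a = 1) {P : Matrix (S × A) S ℝ} (hP0 : ∀ p s, 0 ≤ P p s)
    (hP1 : ∀ p, ∑ s, P p s = 1) : actMat π * P ∈ rowStochastic ℝ S := by
  have hmul (i j : S) : (actMat π * P) i j = ∑ a, π i a * P (i, a) j :=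
    actMat_mulVec_apply π (fun p => P p j) i
  refine mem_rowStochastic_iff_sum.2 ⟨fun i j => ?_, fun i => ?_⟩
  · rw [hmul]
    exact sum_nonneg fun a _ => mul_nonneg (hπ0 i a) (hP0 _ j)
  · simp only [hmul]
    rw [sum_comm]
    simp only [← mul_sum, hP1, mul_one, hπ1]

end ActivityMatrix

/-- The CQL divergence `Dis-CQL(π, π̂β)(s) = E_{a∼π(·|s)}[π(a|s)/π̂β(a|s) − 1]`. -/
noncomputable def disCQL {S A : Type*} [Fintype A] (π πβ : S → A → ℝ) (s : S) : ℝ :=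
  ∑ a, π s a * (π s a / πβ s a - 1)

/-- By Sedrakyan's lemma, `∑ π²/πβ ≥ (∑ π)² / ∑ πβ = 1`. -/
theorem disCQL_nonneg {S A : Type*} [Fintype A] {π πβ : S → A → ℝ}
    (hπ1 : ∀ s, ∑ a, π s a = 1) (hπβ0 : ∀ s a, 0 < πβ s a) (hπβ1 : ∀ s, ∑ a, πβ s a = 1)
    (s : S) : 0 ≤ disCQL π πβ s := by
  have hsq := sq_sum_div_le_sum_sq_div univ (π s) fun a _ => hπβ0 s a
  rw [hπ1, hπβ1, one_pow, div_one] at hsq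
  have hterm (a : A) : π s a * (π s a / πβ s a - 1) = π s a ^ 2 / πβ s a - π s a := by ring
  simp only [disCQL, hterm, sum_sub_distrib, hπ1]
  linarith

section Bellman

variable {S A : Type*} [Fintype S] [Fintype A] [DecidableEq S]

theorem actMat_mulVec_penalty (π πβ : S → A → ℝ) (hπβ0 : ∀ s a, 0 < πβ s a) (w : S → ℝ) :
    actMat π *ᵥ (fun p => w p.1 * (π p.1 p.2 - πβ p.1 p.2) / πβ p.1 p.2)
      = fun s => w s * disCQL π πβ s := by
  funext s
  rw [actMat_mulVec_apply, disCQL, mul_sum]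
  refine sum_congr rfl fun a _ => ?_
  field_simp [(hπβ0 s a).ne']

theorem one_sub_smul_mulVec_actMat_mulVec_of_fixedPoint {π πβ : S → A → ℝ}
    (hπβ0 : ∀ s a, 0 < πβ s a) {PD : Matrix (S × A) S ℝ} {rD Q : S × A → ℝ} {γ α : ℝ}
    {w : S → ℝ} (hQ : ∀ p : S × A, Q p = rD p + γ * PD.mulVec ((actMat π).mulVec Q) p
        - α * (w p.1 * (π p.1 p.2 - πβ p.1 p.2) / πβ p.1 p.2)) :
    (1 - γ • (actMat π * PD)) *ᵥ (actMat π *ᵥ Q)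
      = actMat π *ᵥ rD - α • fun s => w s * disCQL π πβ s := by
  have hQvec : Q = rD + γ • PD *ᵥ (actMat π *ᵥ Q)
      - α • fun p => w p.1 * (π p.1 p.2 - πβ p.1 p.2) / πβ p.1 p.2 := funext hQ
  have hVh : actMat π *ᵥ Q = actMat π *ᵥ rD + γ • (actMat π * PD) *ᵥ (actMat π *ᵥ Q)
      - α • fun s => w s * disCQL π πβ s := by
    conv_lhs => rw [hQvec]
    rw [mulVec_sub, mulVec_add, mulVec_smul, mulVec_smul, mulVec_mulVec,
      actMat_mulVec_penalty π πβ hπβ0]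
  rw [sub_mulVec, one_mulVec, smul_mulVec]
  nth_rewrite 1 [hVh]
  abel

theorem one_sub_smul_mulVec_valVec {π : S → A → ℝ} (hπ0 : ∀ s a, 0 ≤ π s a)
    (hπ1 : ∀ s, ∑ a, π s a = 1) {P : Matrix (S × A) S ℝ} (hP0 : ∀ p s, 0 ≤ P p s)
    (hP1 : ∀ p, ∑ s, P p s = 1) {γ : ℝ} (hγ0 : 0 ≤ γ) (hγ1 : γ < 1) (r : S × A → ℝ) :
    (1 - γ • (actMat π * P)) *ᵥ valVec γ P r π = actMat π *ᵥ r :=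
  one_sub_smul_mulVec_inv_mulVec (actMat_mul_mem_rowStochastic hπ0 hπ1 hP0 hP1) hγ0 hγ1 _

theorem one_sub_smul_mulVec_sub_of_bellman (M : Matrix S (S × A) ℝ)
    (P PD : Matrix (S × A) S ℝ) (r rD : S × A → ℝ) (γ : ℝ) {V Vh c : S → ℝ}
    (hV : (1 - γ • (M * P)) *ᵥ V = M *ᵥ r)
    (hVh : (1 - γ • (M * PD)) *ᵥ Vh = M *ᵥ rD - c) :
    (1 - γ • (M * PD)) *ᵥ (Vh - V) = M *ᵥ (rD - r) + γ • M *ᵥ ((PD - P) *ᵥ V) - c := by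
  rw [sub_mulVec, one_mulVec, smul_mulVec, ← mulVec_mulVec] at hV
  rw [mulVec_sub, hVh, sub_mulVec, one_mulVec, smul_mulVec, ← mulVec_mulVec, mulVec_sub M rD r,
    sub_mulVec PD P V, mulVec_sub M, ← hV]
  module

end Bellman

theorem sa_cql_underestimation_general {S A : Type*} [Fintype S] [Fintype A]
    [DecidableEq S]
    (P PD : Matrix (S × A) S ℝ)
    (hP0 : ∀ p s, 0 ≤ P p s) (hP1 : ∀ p, ∑ s, P p s = 1)
    (hPD0 : ∀ p s, 0 ≤ PD p s) (hPD1 : ∀ p, ∑ s, PD p s = 1)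
    (r rD : S × A → ℝ)
    (π πβ : S → A → ℝ) (hπ0 : ∀ s a, 0 ≤ π s a) (hπ1 : ∀ s, ∑ a, π s a = 1)
    (hπβ0 : ∀ s a, 0 < πβ s a) (hπβ1 : ∀ s, ∑ a, πβ s a = 1)
    (γ : ℝ) (hγ0 : 0 ≤ γ) (hγ1 : γ < 1)
    (α : ℝ) (hα : 0 < α) (w : S → ℝ) (hw : ∀ s, 0 ≤ w s)
    (Qhat : S × A → ℝ)
    (hQhat : ∀ p : S × A, Qhat p = rD p + γ * PD.mulVec ((actMat π).mulVec Qhat) p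
        - α * (w p.1 * (π p.1 p.2 - πβ p.1 p.2) / πβ p.1 p.2))
    (u : S → ℝ)
    (hub : ∀ s, |((actMat π).mulVec (rD - r)
        + γ • (actMat π).mulVec ((PD - P).mulVec (valVec γ P r π))) s| ≤ u s) :
    (∀ s, ∑ a, π s a * Qhat (s, a)
        ≤ valVec γ P r π s - α * w s * (∑ a, π s a * (π s a / πβ s a - 1))
          + (1 - γ • (actMat π * PD))⁻¹.mulVec u s) ∧
    ((∀ s, (1 - γ • (actMat π * PD))⁻¹.mulVec u s
        ≤ α * w s * (∑ a, π s a * (π s a / πβ s a - 1))) →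
      ∀ s, ∑ a, π s a * Qhat (s, a) ≤ valVec γ P r π s) := by
  have hgap := le_inv_mulVec_sub_smul_of_mulVec_eq
    (actMat_mul_mem_rowStochastic hπ0 hπ1 hPD0 hPD1) hγ0 hγ1 hα.le
    (fun s => (le_abs_self _).trans (hub s))
    (fun s => mul_nonneg (hw s) (disCQL_nonneg hπ1 hπβ0 hπβ1 s))
    (one_sub_smul_mulVec_sub_of_bellman _ P PD r rD γ
      (one_sub_smul_mulVec_valVec hπ0 hπ1 hP0 hP1 hγ0 hγ1 r)
      (one_sub_smul_mulVec_actMat_mulVec_of_fixedPoint hπβ0 hQhat))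
  have hbound (s : S) : ∑ a, π s a * Qhat (s, a)
      ≤ valVec γ P r π s - α * w s * (∑ a, π s a * (π s a / πβ s a - 1))
        + (1 - γ • (actMat π * PD))⁻¹.mulVec u s := by
    have := hgap s
    simp only [Pi.sub_apply, Pi.smul_apply, smul_eq_mul, actMat_mulVec_apply, disCQL] at this
    linarith
  exact ⟨hbound, fun hdom s => by linarith [hbound s, hdom s]⟩

/-- Theorem 4, underestimation. Let `Q̂^π` be the fixed point of the
SA-CQL Q-update `Q ↦ r_D + γ P_D Aπ Q − α e` with penalty
`e(s,a) = w(s)(π(a|s) − π̂β(a|s))/π̂β(a|s)`, and let `u` bound the empirical Bellman residual.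
Then `V̂^π(s) ≤ V^π(s) − α w(s) DisCQL(s) + ((I − γAπP_D)⁻¹ u)(s)` for all `s`; in particular
if `α w DisCQL` pointwise dominates `(I − γAπP_D)⁻¹ u` then `V̂^π ≤ V^π` pointwise. -/
theorem sa_cql_underestimation {S A : Type*} [Fintype S] [Fintype A]
    [Nonempty S] [Nonempty A] [DecidableEq S]
    (P PD : Matrix (S × A) S ℝ)
    (hP0 : ∀ p s, 0 ≤ P p s) (hP1 : ∀ p, ∑ s, P p s = 1)
    (hPD0 : ∀ p s, 0 ≤ PD p s) (hPD1 : ∀ p, ∑ s, PD p s = 1)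
    (r rD : S × A → ℝ)
    (π πβ : S → A → ℝ) (hπ0 : ∀ s a, 0 ≤ π s a) (hπ1 : ∀ s, ∑ a, π s a = 1)
    (hπβ0 : ∀ s a, 0 < πβ s a) (hπβ1 : ∀ s, ∑ a, πβ s a = 1)
    (γ : ℝ) (hγ0 : 0 ≤ γ) (hγ1 : γ < 1)
    (α : ℝ) (hα : 0 < α) (w : S → ℝ) (hw : ∀ s, 0 ≤ w s)
    (Qhat : S × A → ℝ)
    (hQhat : ∀ p : S × A, Qhat p = rD p + γ * PD.mulVec ((actMat π).mulVec Qhat) p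
        - α * (w p.1 * (π p.1 p.2 - πβ p.1 p.2) / πβ p.1 p.2))
    (u : S → ℝ) (hu0 : ∀ s, 0 ≤ u s)
    (hub : ∀ s, |((actMat π).mulVec (rD - r)
        + γ • (actMat π).mulVec ((PD - P).mulVec (valVec γ P r π))) s| ≤ u s) :
    (∀ s, ∑ a, π s a * Qhat (s, a)
        ≤ valVec γ P r π s - α * w s * (∑ a, π s a * (π s a / πβ s a - 1))
          + (1 - γ • (actMat π * PD))⁻¹.mulVec u s) ∧
    ((∀ s, (1 - γ • (actMat π * PD))⁻¹.mulVec u s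
        ≤ α * w s * (∑ a, π s a * (π s a / πβ s a - 1))) →
      ∀ s, ∑ a, π s a * Qhat (s, a) ≤ valVec γ P r π s) :=
  sa_cql_underestimation_general P PD hP0 hP1 hPD0 hPD1 r rD π πβ hπ0 hπ1 hπβ0 hπβ1 γ hγ0 hγ1 α hα w
    hw Qhat hQhat u hub
end
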